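/- arXiv:2204.10666 — 3 statements merged into one kernel-verified Lean document; each statement's English description precedes it below -/
import Mathlib

section
/- The super domination number of the complete bipartite graph K_{n,m} equals n + m − 2. -/
open SimpleGraph

/-- A super dominating set: a dominating set `S` such that every vertex `u ∉ S`
has a private "super" dominator `v ∈ S` with `N(v) ∩ (V \ S) = {u}`. -/
def IsSuperDominatingSet {V : Type*} (G : SimpleGraph V) (S : Finset V) : Prop :=
  (∀ u ∉ S, ∃ v ∈ S, G.Adj v u) ∧
  (∀ u ∉ S, ∃ v ∈ S, ∀ w, (G.Adj v w ∧ w ∉ S) ↔ w = u)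

/-- The super domination number: minimum size of a super dominating set. -/
noncomputable def superDominationNumber {V : Type*} (G : SimpleGraph V) : ℕ :=
  sInf {n | ∃ S : Finset V, IsSuperDominatingSet G S ∧ S.card = n}

open Finset

/-
In `K_{α,β}` two vertices on the same side have the same neighbourhood, so a vertex `v`
adjacent to a vertex `u ∉ S` is adjacent to every vertex of `V \ S` on `u`'s side; as
`N(v) ∩ (V \ S) = {u}` for the super dominator `v` of `u`, the set `V \ S` meets each side
at most once, whence `|S| ≥ |α| + |β| - 2`. Conversely, removing one vertex `a` from `α` and
one vertex `b` from `β` leaves a super dominating set: any other vertex of `β` is a super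
dominator for `a`, and any other vertex of `α` for `b`.
-/

section SuperDomination

variable {V : Type*} {G : SimpleGraph V} {S : Finset V}

lemma IsSuperDominatingSet.of_forall_exists
    (h : ∀ u ∉ S, ∃ v ∈ S, ∀ w, (G.Adj v w ∧ w ∉ S) ↔ w = u) :
    IsSuperDominatingSet G S :=
  ⟨fun u hu ↦ let ⟨v, hv, hvu⟩ := h u hu; ⟨v, hv, ((hvu u).2 rfl).1⟩, h⟩

lemma IsSuperDominatingSet.eq_of_neighborSet_subset (hS : IsSuperDominatingSet G S)
    {u u' : V} (hu : u ∉ S) (hu' : u' ∉ S) (h : G.neighborSet u ⊆ G.neighborSet u') :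
    u' = u := by
  obtain ⟨v, -, hvu⟩ := hS.2 u hu
  have hadj : G.Adj u v := ((hvu u).2 rfl).1.symm
  exact (hvu u').1 ⟨(h hadj).symm, hu'⟩

lemma superDominationNumber_le (hS : IsSuperDominatingSet G S) :
    superDominationNumber G ≤ S.card :=
  Nat.sInf_le ⟨S, hS, rfl⟩

lemma le_superDominationNumber [Fintype V] {k : ℕ}
    (h : ∀ S, IsSuperDominatingSet G S → k ≤ S.card) : k ≤ superDominationNumber G := by
  have huniv : IsSuperDominatingSet G univ := ⟨by simp, by simp⟩
  refine le_csInf ⟨_, univ, huniv, rfl⟩ ?_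
  rintro _ ⟨S, hS, rfl⟩
  exact h S hS

end SuperDomination

section CompleteBipartite

variable {α β : Type*}

lemma completeBipartiteGraph_neighborSet_eq_of_isLeft_eq {u u' : α ⊕ β}
    (h : u.isLeft = u'.isLeft) :
    (completeBipartiteGraph α β).neighborSet u = (completeBipartiteGraph α β).neighborSet u' := by
  ext w
  rcases u with _ | _ <;> rcases u' with _ | _ <;> rcases w with _ | _ <;> simp_all

lemma IsSuperDominatingSet.card_compl_le_two [Fintype α] [Fintype β] [DecidableEq α]
    [DecidableEq β] {S : Finset (α ⊕ β)}
    (hS : IsSuperDominatingSet (completeBipartiteGraph α β) S) : Sᶜ.card ≤ 2 := by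
  have hinj : Set.InjOn Sum.isLeft (↑Sᶜ : Set (α ⊕ β)) := by
    intro u hu u' hu' h
    simp only [coe_compl, Set.mem_compl_iff, mem_coe] at hu hu'
    exact hS.eq_of_neighborSet_subset hu' hu
      (completeBipartiteGraph_neighborSet_eq_of_isLeft_eq h).ge
  simpa using card_le_card_of_injOn Sum.isLeft (fun _ _ ↦ mem_coe.2 (mem_univ _)) hinj

lemma isSuperDominatingSet_compl_inl_inr [Fintype α] [Fintype β] [DecidableEq α]
    [DecidableEq β] {a a' : α} {b b' : β} (ha : a ≠ a') (hb : b ≠ b') :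
    IsSuperDominatingSet (completeBipartiteGraph α β) {Sum.inl a, Sum.inr b}ᶜ := by
  refine .of_forall_exists fun u hu ↦ ?_
  simp only [mem_compl, not_not, mem_insert, mem_singleton] at hu
  rcases hu with rfl | rfl
  · refine ⟨Sum.inr b', by simp [hb.symm], fun w ↦ ?_⟩
    rcases w with _ | _ <;> simp
  · refine ⟨Sum.inl a', by simp [ha.symm], fun w ↦ ?_⟩
    rcases w with _ | _ <;> simp

theorem superDominationNumber_completeBipartiteGraph [Fintype α] [Fintype β] [Nontrivial α]
    [Nontrivial β] :
    superDominationNumber (completeBipartiteGraph α β) = Fintype.card α + Fintype.card β - 2 := by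
  classical
  obtain ⟨a, a', ha⟩ := exists_pair_ne α
  obtain ⟨b, b', hb⟩ := exists_pair_ne β
  have hpair : ({Sum.inl a, Sum.inr b} : Finset (α ⊕ β)).card = 2 := card_pair (by simp)
  apply le_antisymm
  · refine (superDominationNumber_le (isSuperDominatingSet_compl_inl_inr ha hb)).trans ?_
    rw [card_compl, hpair, Fintype.card_sum]
  · refine le_superDominationNumber fun S hS ↦ ?_
    have hsum := card_add_card_compl S
    have hcompl := hS.card_compl_le_two
    rw [Fintype.card_sum] at hsum
    omega

end CompleteBipartite

/-- For the complete bipartite graph `K_{n,m}` (with `n, m ≥ 2`),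
`γ_sp(K_{n,m}) = n + m - 2`. -/
theorem stmt4 (n m : ℕ) (hn : 2 ≤ n) (hm : 2 ≤ m) :
    superDominationNumber (completeBipartiteGraph (Fin n) (Fin m)) = n + m - 2 := by
  have : Nontrivial (Fin n) := Fin.nontrivial_iff_two_le.2 hn
  have : Nontrivial (Fin m) := Fin.nontrivial_iff_two_le.2 hm
  simpa using superDominationNumber_completeBipartiteGraph (α := Fin n) (β := Fin m)
end

section
/- For the Dutch windmill graph D_n^{(m)} with m ≥ 4, the super domination number satisfies γ_sp(D_n^{(m)}) ≤ n⌈(m−1)/2⌉ + 1. -/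
open SimpleGraph

/-- The Dutch windmill graph `D_n^{(m)}`: `n` copies of the cycle `C_m` sharing a common
vertex (the `Sum.inl` vertex).  The `i`-th copy has path vertices `(i, 0), …, (i, m-2)`,
with the centre adjacent to the two endpoints. -/
def dutchWindmill (n m : ℕ) : SimpleGraph (Unit ⊕ Fin n × Fin (m - 1)) :=
  SimpleGraph.fromRel (fun a b =>
    match a, b with
    | Sum.inl _, Sum.inr (_, k) => k.val = 0 ∨ k.val = m - 2
    | Sum.inr (i, k), Sum.inr (j, l) => i = j ∧ l.val = k.val + 1
    | _, _ => False)

open Finset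

/-! Removing the centre from `D_n^{(m)}` leaves `n` disjoint paths `P_{m-1}`.  A vertex of `S`
other than the centre has, besides its path neighbours, at most the centre as a neighbour, which
lies in `S` and so never counts against privacy.  Hence the centre together with a copy of a super
dominating set of `P_{m-1}` in every blade is super dominating in the windmill.  In the path,
the vertices `k ≡ 1, 2 (mod 4)`, plus the last vertex when it is `≡ 0 (mod 4)`, form a super
dominating set of size `⌈(m-1)/2⌉`: the vertex `4q + 1` privately dominates `4q`, and
`4q + 2` privately dominates `4q + 3`. -/

section SuperDomination

variable {V : Type*} (G : SimpleGraph V)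

theorem isSuperDominatingSet_iff {S : Finset V} :
    IsSuperDominatingSet G S ↔ ∀ u ∉ S, ∃ v ∈ S, ∀ w, (G.Adj v w ∧ w ∉ S) ↔ w = u := by
  refine ⟨And.right, fun h => ⟨fun u hu => ?_, h⟩⟩
  obtain ⟨v, hv, hvu⟩ := h u hu
  exact ⟨v, hv, ((hvu u).2 rfl).1⟩

theorem superDominationNumber_le_card {S : Finset V} (hS : IsSuperDominatingSet G S) :
    superDominationNumber G ≤ #S :=
  Nat.sInf_le ⟨S, hS, rfl⟩

end SuperDomination

section Path

def pathSuperDominatingSet (t : ℕ) : Finset (Fin t) :=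
  {k | k.val % 4 = 1 ∨ k.val % 4 = 2 ∨ (k.val % 4 = 0 ∧ k.val + 1 = t)}

theorem isSuperDominatingSet_pathSuperDominatingSet (t : ℕ) :
    IsSuperDominatingSet (pathGraph t) (pathSuperDominatingSet t) := by
  refine (isSuperDominatingSet_iff _).2 fun u hu => ?_
  simp only [pathSuperDominatingSet, mem_filter, mem_univ, true_and] at hu
  obtain ⟨v, hv⟩ : ∃ v : Fin t,
      (u.val % 4 = 3 ∧ v.val + 1 = u.val) ∨ (u.val % 4 ≠ 3 ∧ v.val = u.val + 1) := by
    by_cases h3 : u.val % 4 = 3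
    · exact ⟨⟨u.val - 1, by omega⟩, .inl ⟨h3, by simp only; omega⟩⟩
    · exact ⟨⟨u.val + 1, by omega⟩, .inr ⟨h3, rfl⟩⟩
  refine ⟨v, ?_, fun w => ?_⟩ <;>
    simp only [pathSuperDominatingSet, mem_filter, mem_univ, true_and, pathGraph_adj,
      Fin.ext_iff] <;>
    omega

theorem card_filter_range_mod_four_eq_one_or_two (t : ℕ) :
    #{k ∈ range t | k % 4 = 1 ∨ k % 4 = 2} = (t + 2) / 4 + (t + 1) / 4 := by
  induction t with
  | zero => rfl
  | succ t ih =>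
    rw [range_add_one, filter_insert]
    split_ifs
    · rw [card_insert_of_notMem (by simp), ih]; omega
    · rw [ih]; omega

theorem Fin.card_filter_univ_val (t : ℕ) (p : ℕ → Prop) [DecidablePred p] :
    #{k : Fin t | p k} = #{k ∈ range t | p k} := by
  rw [card_filter, card_filter, Fin.sum_univ_eq_sum_range (fun k => if p k then 1 else 0)]

theorem card_pathSuperDominatingSet (t : ℕ) : #(pathSuperDominatingSet t) = (t + 1) / 2 := by
  rw [pathSuperDominatingSet,
    Fin.card_filter_univ_val t fun k => k % 4 = 1 ∨ k % 4 = 2 ∨ (k % 4 = 0 ∧ k + 1 = t)]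
  cases t with
  | zero => rfl
  | succ s =>
    have hprefix : {k ∈ range s | k % 4 = 1 ∨ k % 4 = 2 ∨ (k % 4 = 0 ∧ k + 1 = s + 1)} =
        {k ∈ range s | k % 4 = 1 ∨ k % 4 = 2} :=
      filter_congr fun k hk => by rw [mem_range] at hk; omega
    have hcount := card_filter_range_mod_four_eq_one_or_two s
    rw [range_add_one, filter_insert, hprefix]
    split_ifs
    · rw [card_insert_of_notMem (by simp), hcount]; omega
    · rw [hcount]; omega

end Path

section Windmill

variable {n m : ℕ}

theorem dutchWindmill_adj_inr_inr {i j : Fin n} {k l : Fin (m - 1)} :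
    (dutchWindmill n m).Adj (.inr (i, k)) (.inr (j, l)) ↔ i = j ∧ (pathGraph (m - 1)).Adj k l := by
  simp only [dutchWindmill, fromRel_adj, pathGraph_adj, ne_eq, Sum.inr.injEq, Prod.mk.injEq,
    Fin.ext_iff (n := m - 1)]
  constructor
  · rintro ⟨-, ⟨rfl, h⟩ | ⟨rfl, h⟩⟩ <;> exact ⟨rfl, by omega⟩
  · rintro ⟨rfl, h⟩; omega

def bladewiseSet (n : ℕ) {t : ℕ} (S : Finset (Fin t)) : Finset (Unit ⊕ Fin n × Fin t) :=
  univ.disjSum (univ ×ˢ S)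

theorem card_bladewiseSet {t : ℕ} (S : Finset (Fin t)) :
    #(bladewiseSet n S) = n * #S + 1 := by
  simp [bladewiseSet, card_disjSum, card_product, add_comm]

theorem isSuperDominatingSet_bladewiseSet {S : Finset (Fin (m - 1))}
    (hS : IsSuperDominatingSet (pathGraph (m - 1)) S) :
    IsSuperDominatingSet (dutchWindmill n m) (bladewiseSet n S) := by
  refine (isSuperDominatingSet_iff _).2 ?_
  rintro (_ | ⟨i, k⟩) hu
  · exact absurd (by simp [bladewiseSet]) hu
  have hk : k ∉ S := by simpa [bladewiseSet] using hu
  obtain ⟨v, hv, hvk⟩ := hS.2 k hk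
  refine ⟨.inr (i, v), by simpa [bladewiseSet] using hv, ?_⟩
  rintro (_ | ⟨j, l⟩)
  · simp [bladewiseSet]
  · simp only [dutchWindmill_adj_inr_inr, bladewiseSet, inr_mem_disjSum, mem_product, mem_univ,
      true_and, Sum.inr.injEq, Prod.mk.injEq]
    rw [and_assoc, hvk l, eq_comm (a := i)]

end Windmill

theorem stmt6_general (n m : ℕ) :
    superDominationNumber (dutchWindmill n m) ≤ n * ((m - 1 + 1) / 2) + 1 := by
  calc superDominationNumber (dutchWindmill n m)
      ≤ #(bladewiseSet n (pathSuperDominatingSet (m - 1))) :=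
        superDominationNumber_le_card _ <|
          isSuperDominatingSet_bladewiseSet (isSuperDominatingSet_pathSuperDominatingSet _)
    _ = n * ((m - 1 + 1) / 2) + 1 := by
      rw [card_bladewiseSet, card_pathSuperDominatingSet]

/-- For the Dutch windmill graph `D_n^{(m)}` with `m ≥ 4`,
`γ_sp(D_n^{(m)}) ≤ n⌈(m-1)/2⌉ + 1`. -/
theorem stmt6 (n m : ℕ) (hm : 4 ≤ m) :
    superDominationNumber (dutchWindmill n m) ≤ n * ((m - 1 + 1) / 2) + 1 :=
  stmt6_general n m
end

section
/- For any graph G = (V,E) and any edge e ∈ E, the super domination number satisfies γ_sp(G) − 1 ≤ γ_sp(G/e) ≤ γ_sp(G). -/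
open SimpleGraph

/-- Edge contraction of the edge `uv`: `v` is deleted and `u` plays the role of the merged
vertex, adjacent to all former neighbours of `u` or `v`. -/
def contractEdge {V : Type*} (G : SimpleGraph V) (u v : V) : SimpleGraph {x : V // x ≠ v} :=
  SimpleGraph.fromRel (fun a b => G.Adj a.val b.val ∨ (a.val = u ∧ G.Adj v b.val))

/-- Vertex deletion. -/
def deleteVertex {V : Type*} (G : SimpleGraph V) (v : V) : SimpleGraph {x : V // x ≠ v} :=
  G.induce {x : V | x ≠ v}

/-- Vertex contraction: delete `v` and make its open neighbourhood a clique. -/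
def contractVertex {V : Type*} (G : SimpleGraph V) (v : V) : SimpleGraph {x : V // x ≠ v} :=
  SimpleGraph.fromRel (fun a b => G.Adj a.val b.val ∨ (G.Adj v a.val ∧ G.Adj v b.val))

lemma ce_adj {V : Type*} {G : SimpleGraph V} {u v : V} {a b : {x : V // x ≠ v}} :
    (contractEdge G u v).Adj a b ↔
      a ≠ b ∧ (G.Adj a.1 b.1 ∨ (a.1 = u ∧ G.Adj v b.1) ∨ (b.1 = u ∧ G.Adj v a.1)) := by
  simp only [contractEdge, SimpleGraph.fromRel_adj]
  constructor
  · rintro ⟨hab, (hh|⟨h1,h2⟩)|(hh|⟨h1,h2⟩)⟩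
    exacts [⟨hab, Or.inl hh⟩, ⟨hab, Or.inr (Or.inl ⟨h1,h2⟩)⟩,
      ⟨hab, Or.inl hh.symm⟩, ⟨hab, Or.inr (Or.inr ⟨h1,h2⟩)⟩]
  · rintro ⟨hab, hh|⟨h1,h2⟩|⟨h1,h2⟩⟩
    exacts [⟨hab, Or.inl (Or.inl hh)⟩, ⟨hab, Or.inl (Or.inr ⟨h1,h2⟩)⟩,
      ⟨hab, Or.inr (Or.inr ⟨h1,h2⟩)⟩]

lemma mem_image_val {V : Type*} [DecidableEq V] {v : V} {T : Finset {x : V // x ≠ v}} {z : V}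
    (hz : z ≠ v) : z ∈ T.image Subtype.val ↔ (⟨z, hz⟩ : {x : V // x ≠ v}) ∈ T := by
  simp only [Finset.mem_image]
  constructor
  · rintro ⟨a, ha, rfl⟩; exact (by cases a; exact ha)
  · intro hz'; exact ⟨_, hz', rfl⟩

lemma not_v_mem_image_val {V : Type*} [DecidableEq V] {v : V} {T : Finset {x : V // x ≠ v}} :
    v ∉ T.image Subtype.val := by
  simp only [Finset.mem_image]
  rintro ⟨a, _, ha⟩; exact a.2 ha

lemma lower_aux {V : Type*} [DecidableEq V] {G : SimpleGraph V} {u v : V} (h : G.Adj u v)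
    (T : Finset {x : V // x ≠ v}) (hT : IsSuperDominatingSet (contractEdge G u v) T) :
    ∃ S : Finset V, IsSuperDominatingSet G S ∧ S.card ≤ T.card + 1 := by
  have hne : u ≠ v := G.ne_of_adj h
  set xs : {x : V // x ≠ v} := ⟨u, hne⟩ with hxs
  set T' : Finset V := T.image Subtype.val with hT'
  obtain ⟨hdom, hsup⟩ := hT
  have hcard : ∀ a : V, (insert a T').card ≤ T.card + 1 := fun a =>
    le_trans (Finset.card_insert_le _ _) (by
      have h2 := Finset.card_image_le (s := T) (f := Subtype.val)
      rw [hT']; omega)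
  -- adjacency helper: lift a G-adjacency to the contracted graph
  have lift_adj : ∀ (y : {x : V // x ≠ v}) (w : V) (hw : w ≠ v), G.Adj y.1 w →
      (contractEdge G u v).Adj y ⟨w, hw⟩ := by
    intro y w hw hadj
    refine ce_adj.mpr ⟨?_, Or.inl hadj⟩
    rintro rfl; exact G.irrefl hadj
  by_cases hxT : xs ∈ T
  · -- Case A : merged vertex in T ; S = insert v T'
    have huT' : u ∈ T' := (mem_image_val hne).mpr hxT
    refine ⟨insert v T', ⟨?_, ?_⟩, hcard v⟩
    · intro z hzS
      simp only [Finset.mem_insert, not_or] at hzS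
      obtain ⟨hz1, hz2⟩ := hzS
      have hzu : z ≠ u := fun e => hz2 (e ▸ huT')
      have hz'T : (⟨z, hz1⟩ : {x : V // x ≠ v}) ∉ T := fun c => hz2 ((mem_image_val hz1).mpr c)
      obtain ⟨t, htT, hadj⟩ := hdom _ hz'T
      rcases (ce_adj.mp hadj).2 with hc | ⟨ht, hv⟩ | ⟨hzu', _⟩
      · exact ⟨t.1, Finset.mem_insert_of_mem (Finset.mem_image_of_mem _ htT), hc⟩
      · exact ⟨v, Finset.mem_insert_self _ _, hv⟩
      · exact absurd hzu' hzu
    · intro z hzS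
      simp only [Finset.mem_insert, not_or] at hzS
      obtain ⟨hz1, hz2⟩ := hzS
      have hzu : z ≠ u := fun e => hz2 (e ▸ huT')
      have hz'T : (⟨z, hz1⟩ : {x : V // x ≠ v}) ∉ T := fun c => hz2 ((mem_image_val hz1).mpr c)
      obtain ⟨y, hyT, hpriv⟩ := hsup _ hz'T
      obtain ⟨hadj, -⟩ := (hpriv ⟨z, hz1⟩).mpr rfl
      rcases (ce_adj.mp hadj).2 with hc | ⟨hyu, hvz⟩ | ⟨hzu', _⟩
      · -- private dominator is y itself
        refine ⟨y.1, Finset.mem_insert_of_mem (Finset.mem_image_of_mem _ hyT), fun w => ?_⟩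
        constructor
        · rintro ⟨hadjw, hwS⟩
          simp only [Finset.mem_insert, not_or] at hwS
          obtain ⟨hw1, hw2⟩ := hwS
          have hw'T : (⟨w, hw1⟩ : {x : V // x ≠ v}) ∉ T := fun c => hw2 ((mem_image_val hw1).mpr c)
          have := (hpriv ⟨w, hw1⟩).mp ⟨lift_adj y w hw1 hadjw, hw'T⟩
          exact congrArg Subtype.val this
        · rintro rfl
          refine ⟨hc, ?_⟩
          simp only [Finset.mem_insert, not_or]
          exact ⟨hz1, hz2⟩
      · -- private dominator is v
        refine ⟨v, Finset.mem_insert_self _ _, fun w => ?_⟩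
        constructor
        · rintro ⟨hadjw, hwS⟩
          simp only [Finset.mem_insert, not_or] at hwS
          obtain ⟨hw1, hw2⟩ := hwS
          have hwu : w ≠ u := fun e => hw2 (e ▸ huT')
          have hw'T : (⟨w, hw1⟩ : {x : V // x ≠ v}) ∉ T := fun c => hw2 ((mem_image_val hw1).mpr c)
          have hadj2 : (contractEdge G u v).Adj y ⟨w, hw1⟩ := by
            refine ce_adj.mpr ⟨?_, Or.inr (Or.inl ⟨hyu, hadjw⟩)⟩
            exact fun e => hwu ((congrArg Subtype.val e).symm.trans hyu)
          have := (hpriv ⟨w, hw1⟩).mp ⟨hadj2, hw'T⟩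
          exact congrArg Subtype.val this
        · rintro rfl
          refine ⟨hvz, ?_⟩
          simp only [Finset.mem_insert, not_or]
          exact ⟨hz1, hz2⟩
      · exact absurd hzu' hzu
  · -- Case B : merged vertex not in T
    obtain ⟨p, hpT, hppriv⟩ := hsup xs hxT
    obtain ⟨hpadj, -⟩ := (hppriv xs).mpr rfl
    have hp1 : p.1 ≠ u := by
      intro e
      exact hxT (by rwa [show xs = p from Subtype.ext e.symm])
    have hpc : G.Adj p.1 u ∨ G.Adj v p.1 := by
      rcases (ce_adj.mp hpadj).2 with hc | ⟨hyu, _⟩ | ⟨_, hv⟩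
      · exact Or.inl hc
      · exact absurd hyu hp1
      · exact Or.inr hv
    have huT' : u ∉ T' := fun c => hxT ((mem_image_val hne).mp c)
    -- p has no G-neighbours outside T' ∪ {u, v}
    have hpclose : ∀ w, w ≠ v → w ≠ u → G.Adj p.1 w → w ∈ T' := by
      intro w hw1 hwu hadj
      by_contra hwT'
      have hw'T : (⟨w, hw1⟩ : {x : V // x ≠ v}) ∉ T := fun c => hwT' ((mem_image_val hw1).mpr c)
      have := (hppriv ⟨w, hw1⟩).mp ⟨lift_adj p w hw1 hadj, hw'T⟩
      exact hwu (congrArg Subtype.val this)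
    by_cases hpu : G.Adj p.1 u
    · -- Case B1 : S = insert v T'
      refine ⟨insert v T', ⟨?_, ?_⟩, hcard v⟩
      · intro z hzS
        simp only [Finset.mem_insert, not_or] at hzS
        obtain ⟨hz1, hz2⟩ := hzS
        by_cases hzu : z = u
        · exact ⟨v, Finset.mem_insert_self _ _, hzu ▸ h.symm⟩
        · have hz'T : (⟨z, hz1⟩ : {x : V // x ≠ v}) ∉ T := fun c => hz2 ((mem_image_val hz1).mpr c)
          obtain ⟨t, htT, hadj⟩ := hdom _ hz'T
          rcases (ce_adj.mp hadj).2 with hc | ⟨ht, hv⟩ | ⟨hzu', _⟩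
          · exact ⟨t.1, Finset.mem_insert_of_mem (Finset.mem_image_of_mem _ htT), hc⟩
          · exact ⟨v, Finset.mem_insert_self _ _, hv⟩
          · exact absurd hzu' hzu
      · intro z hzS
        simp only [Finset.mem_insert, not_or] at hzS
        obtain ⟨hz1, hz2⟩ := hzS
        by_cases hzu : z = u
        · -- private dominator of u is p
          refine ⟨p.1, Finset.mem_insert_of_mem (Finset.mem_image_of_mem _ hpT), fun w => ?_⟩
          constructor
          · rintro ⟨hadjw, hwS⟩
            simp only [Finset.mem_insert, not_or] at hwS
            obtain ⟨hw1, hw2⟩ := hwS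
            by_contra hwz
            have hwu : w ≠ u := fun e => hwz (e.trans hzu.symm)
            exact hw2 (hpclose w hw1 hwu hadjw)
          · rintro rfl
            refine ⟨by rw [hzu]; exact hpu, ?_⟩
            simp only [Finset.mem_insert, not_or]
            exact ⟨hz1, hz2⟩
        · -- ordinary vertex
          have hz'T : (⟨z, hz1⟩ : {x : V // x ≠ v}) ∉ T := fun c => hz2 ((mem_image_val hz1).mpr c)
          obtain ⟨y, hyT, hpriv⟩ := hsup _ hz'T
          have hy1 : y.1 ≠ u := by
            intro e
            exact hxT (by rwa [show xs = y from Subtype.ext e.symm])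
          refine ⟨y.1, Finset.mem_insert_of_mem (Finset.mem_image_of_mem _ hyT), fun w => ?_⟩
          constructor
          · rintro ⟨hadjw, hwS⟩
            simp only [Finset.mem_insert, not_or] at hwS
            obtain ⟨hw1, hw2⟩ := hwS
            by_cases hwu : w = u
            · have hadjw' : G.Adj y.1 u := by rw [← hwu]; exact hadjw
              have hadj2 : (contractEdge G u v).Adj y xs := by
                refine ce_adj.mpr ⟨?_, Or.inl hadjw'⟩
                intro e; exact hy1 (congrArg Subtype.val e)
              have := (hpriv xs).mp ⟨hadj2, hxT⟩
              exact absurd (congrArg Subtype.val this).symm hzu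
            · have hw'T : (⟨w, hw1⟩ : {x : V // x ≠ v}) ∉ T :=
                fun c => hw2 ((mem_image_val hw1).mpr c)
              have := (hpriv ⟨w, hw1⟩).mp ⟨lift_adj y w hw1 hadjw, hw'T⟩
              exact congrArg Subtype.val this
          · intro hwz
            obtain ⟨hadj, -⟩ := (hpriv ⟨z, hz1⟩).mpr rfl
            rcases (ce_adj.mp hadj).2 with hc | ⟨hyu, _⟩ | ⟨hzu', _⟩
            · refine ⟨by rw [hwz]; exact hc, ?_⟩
              rw [hwz]
              simp only [Finset.mem_insert, not_or]
              exact ⟨hz1, hz2⟩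
            · exact absurd hyu hy1
            · exact absurd hzu' hzu
    · -- Case B2 : S = insert u T'
      have hpv : G.Adj v p.1 := hpc.resolve_left hpu
      refine ⟨insert u T', ⟨?_, ?_⟩, hcard u⟩
      · intro z hzS
        simp only [Finset.mem_insert, not_or] at hzS
        obtain ⟨hzu, hz2⟩ := hzS
        by_cases hz1 : z = v
        · exact ⟨p.1, Finset.mem_insert_of_mem (Finset.mem_image_of_mem _ hpT), hz1 ▸ hpv.symm⟩
        · have hz'T : (⟨z, hz1⟩ : {x : V // x ≠ v}) ∉ T := fun c => hz2 ((mem_image_val hz1).mpr c)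
          obtain ⟨t, htT, hadj⟩ := hdom _ hz'T
          rcases (ce_adj.mp hadj).2 with hc | ⟨ht, hv⟩ | ⟨hzu', _⟩
          · exact ⟨t.1, Finset.mem_insert_of_mem (Finset.mem_image_of_mem _ htT), hc⟩
          · exact absurd (by rwa [show t = xs from Subtype.ext ht] at htT) hxT
          · exact absurd hzu' hzu
      · intro z hzS
        simp only [Finset.mem_insert, not_or] at hzS
        obtain ⟨hzu, hz2⟩ := hzS
        by_cases hz1 : z = v
        · -- private dominator of v is p
          refine ⟨p.1, Finset.mem_insert_of_mem (Finset.mem_image_of_mem _ hpT), fun w => ?_⟩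
          constructor
          · rintro ⟨hadjw, hwS⟩
            simp only [Finset.mem_insert, not_or] at hwS
            obtain ⟨hwu, hw2⟩ := hwS
            by_contra hwz
            have hw1 : w ≠ v := fun e => hwz (e.trans hz1.symm)
            exact hw2 (hpclose w hw1 hwu hadjw)
          · rintro rfl
            refine ⟨by rw [hz1]; exact hpv.symm, ?_⟩
            simp only [Finset.mem_insert, not_or]
            exact ⟨hzu, hz2⟩
        · -- ordinary vertex
          have hz'T : (⟨z, hz1⟩ : {x : V // x ≠ v}) ∉ T := fun c => hz2 ((mem_image_val hz1).mpr c)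
          obtain ⟨y, hyT, hpriv⟩ := hsup _ hz'T
          have hy1 : y.1 ≠ u := by
            intro e
            exact hxT (by rwa [show xs = y from Subtype.ext e.symm])
          refine ⟨y.1, Finset.mem_insert_of_mem (Finset.mem_image_of_mem _ hyT), fun w => ?_⟩
          constructor
          · rintro ⟨hadjw, hwS⟩
            simp only [Finset.mem_insert, not_or] at hwS
            obtain ⟨hwu, hw2⟩ := hwS
            by_cases hw1 : w = v
            · have hadjw' : G.Adj v y.1 := by
                rw [hw1] at hadjw; exact hadjw.symm
              have hadj2 : (contractEdge G u v).Adj y xs := by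
                refine ce_adj.mpr ⟨?_, Or.inr (Or.inr ⟨rfl, hadjw'⟩)⟩
                intro e; exact hy1 (congrArg Subtype.val e)
              have := (hpriv xs).mp ⟨hadj2, hxT⟩
              exact absurd (congrArg Subtype.val this).symm hzu
            · have hw'T : (⟨w, hw1⟩ : {x : V // x ≠ v}) ∉ T :=
                fun c => hw2 ((mem_image_val hw1).mpr c)
              have := (hpriv ⟨w, hw1⟩).mp ⟨lift_adj y w hw1 hadjw, hw'T⟩
              exact congrArg Subtype.val this
          · intro hwz
            obtain ⟨hadj, -⟩ := (hpriv ⟨z, hz1⟩).mpr rfl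
            rcases (ce_adj.mp hadj).2 with hc | ⟨hyu, _⟩ | ⟨hzu', _⟩
            · refine ⟨by rw [hwz]; exact hc, ?_⟩
              rw [hwz]
              simp only [Finset.mem_insert, not_or]
              exact ⟨hzu, hz2⟩
            · exact absurd hyu hy1
            · exact absurd hzu' hzu

lemma lift_adj2 {V : Type*} {G : SimpleGraph V} {u v : V} {a : V} (ha : a ≠ v)
    {b : {x : V // x ≠ v}} (hadj : G.Adj a b.1) : (contractEdge G u v).Adj ⟨a, ha⟩ b := by
  refine ce_adj.mpr ⟨?_, Or.inl hadj⟩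
  intro e
  rw [← e] at hadj
  exact G.irrefl hadj

lemma upper_aux {V : Type*} [DecidableEq V] {G : SimpleGraph V} {u v : V} (h : G.Adj u v)
    (S : Finset V) (hS : IsSuperDominatingSet G S) :
    ∃ T : Finset {x : V // x ≠ v},
      IsSuperDominatingSet (contractEdge G u v) T ∧ T.card ≤ S.card := by
  have hne : u ≠ v := G.ne_of_adj h
  set xs : {x : V // x ≠ v} := ⟨u, hne⟩ with hxs
  set ψ : V → {x : V // x ≠ v} := fun z => if hz : z = v then xs else ⟨z, hz⟩ with hψdef
  have hψ : ∀ (z : V) (hz : z ≠ v), ψ z = ⟨z, hz⟩ := fun z hz => dif_neg hz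
  have hψv : ψ v = xs := dif_pos rfl
  obtain ⟨hdom, hsup⟩ := hS
  have hmem1 : ∀ z' : {x : V // x ≠ v}, z'.1 ∈ S → z' ∈ S.image ψ := by
    intro z' hz
    exact Finset.mem_image.mpr ⟨z'.1, hz, by rw [hψ _ z'.2]⟩
  have hmem3 : ∀ z' ∈ S.image ψ, z'.1 ∈ S ∨ (z' = xs ∧ v ∈ S) := by
    intro z' hz'
    obtain ⟨s, hs, he⟩ := Finset.mem_image.mp hz'
    by_cases hsv : s = v
    · right
      rw [hsv] at hs he
      rw [hψv] at he
      exact ⟨he.symm, hs⟩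
    · left
      rw [hψ s hsv] at he
      rw [← he]
      exact hs
  by_cases hv : v ∈ S
  · -- v ∈ S
    have hxmem : xs ∈ S.image ψ := Finset.mem_image.mpr ⟨v, hv, hψv⟩
    by_cases hu : u ∈ S
    · -- Case 2 : u ∈ S and v ∈ S
      have hmemiff2 : ∀ z' : {x : V // x ≠ v}, z' ∈ S.image ψ ↔ z'.1 ∈ S := by
        intro z'
        constructor
        · intro hz'
          rcases hmem3 z' hz' with hc | ⟨rfl, -⟩
          · exact hc
          · exact hu
        · exact hmem1 z'
      have himgcard : (S.image ψ).card + 1 ≤ S.card + 1 ∧ (S.image ψ).card ≤ S.card - 1 := by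
        have hsub : S.image ψ ⊆ (S.erase v).image ψ := by
          intro z' hz'
          obtain ⟨s, hs, he⟩ := Finset.mem_image.mp hz'
          by_cases hsv : s = v
          · refine Finset.mem_image.mpr ⟨u, Finset.mem_erase.mpr ⟨hne, hu⟩, ?_⟩
            rw [hψ u hne, ← he, hsv, hψv]
          · exact Finset.mem_image.mpr ⟨s, Finset.mem_erase.mpr ⟨hsv, hs⟩, he⟩
        have h1 := Finset.card_le_card hsub
        have h2 := Finset.card_image_le (s := S.erase v) (f := ψ)
        have h3 := Finset.card_erase_of_mem hv
        have h4 : 1 ≤ S.card := Finset.card_pos.mpr ⟨v, hv⟩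
        omega
      -- domination works uniformly here
      have hdom2 : ∀ z' : {x : V // x ≠ v}, z'.1 ∉ S →
          ∃ t' ∈ S.image ψ, (contractEdge G u v).Adj t' z' := by
        intro z' hzS
        obtain ⟨y, hyS, hadj⟩ := hdom z'.1 hzS
        by_cases hyv : y = v
        · rw [hyv] at hadj
          refine ⟨xs, hxmem, ce_adj.mpr ⟨?_, Or.inr (Or.inl ⟨rfl, hadj⟩)⟩⟩
          intro e
          exact hzS (by rw [← e]; exact hu)
        · exact ⟨⟨y, hyv⟩, hmem1 _ hyS, lift_adj2 hyv hadj⟩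
      by_cases hbad : ∃ z1, z1 ∉ S ∧
          ¬∃ y ∈ S, y ≠ u ∧ y ≠ v ∧ ∀ w, (G.Adj y w ∧ w ∉ S) ↔ w = z1
      · -- there is a bad vertex z1 : add it to T
        obtain ⟨z1, hz1S, hz1no⟩ := hbad
        have hz1v : z1 ≠ v := fun e => hz1S (e ▸ hv)
        have hz1u : z1 ≠ u := fun e => hz1S (e ▸ hu)
        refine ⟨insert ⟨z1, hz1v⟩ (S.image ψ), ⟨?_, ?_⟩, ?_⟩
        · -- domination
          intro z' hz'T
          have hzS : z'.1 ∉ S := fun c =>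
            hz'T (Finset.mem_insert_of_mem ((hmemiff2 z').mpr c))
          obtain ⟨t', ht', hadj⟩ := hdom2 z' hzS
          exact ⟨t', Finset.mem_insert_of_mem ht', hadj⟩
        · -- super domination
          intro z' hz'T
          have hzS : z'.1 ∉ S := fun c =>
            hz'T (Finset.mem_insert_of_mem ((hmemiff2 z').mpr c))
          have hzu : z'.1 ≠ u := fun e => hzS (e ▸ hu)
          have hzz1 : z'.1 ≠ z1 := fun e => hz'T (by
            rw [show z' = (⟨z1, hz1v⟩ : {x : V // x ≠ v}) from Subtype.ext e]
            exact Finset.mem_insert_self _ _)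
          by_cases hzb : ∃ y ∈ S, y ≠ u ∧ y ≠ v ∧ ∀ w, (G.Adj y w ∧ w ∉ S) ↔ w = z'.1
          · obtain ⟨y, hyS, hyu, hyv, hpriv⟩ := hzb
            refine ⟨⟨y, hyv⟩, Finset.mem_insert_of_mem (hmem1 _ hyS), fun w' => ?_⟩
            constructor
            · rintro ⟨hadj, hw'T⟩
              have hwS : w'.1 ∉ S := fun c =>
                hw'T (Finset.mem_insert_of_mem ((hmemiff2 w').mpr c))
              have hwu : w'.1 ≠ u := fun e => hwS (e ▸ hu)
              rcases (ce_adj.mp hadj).2 with hc | ⟨e, -⟩ | ⟨e, -⟩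
              · exact Subtype.ext ((hpriv w'.1).mp ⟨hc, hwS⟩)
              · exact absurd e hyu
              · exact absurd e hwu
            · intro hwz
              rw [hwz]
              exact ⟨lift_adj2 hyv ((hpriv z'.1).mpr rfl).1, hz'T⟩
          · -- z' is also bad : use the merged vertex xs
            have hbadAB : ∀ z : V, z ∉ S →
                (¬∃ y ∈ S, y ≠ u ∧ y ≠ v ∧ ∀ w, (G.Adj y w ∧ w ∉ S) ↔ w = z) →
                (∀ w, (G.Adj u w ∧ w ∉ S) ↔ w = z) ∨
                (∀ w, (G.Adj v w ∧ w ∉ S) ↔ w = z) := by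
              intro z hzS hno
              obtain ⟨y, hyS, hpriv⟩ := hsup z hzS
              by_cases hyu : y = u
              · exact Or.inl (by intro w; rw [← hyu]; exact hpriv w)
              · by_cases hyv : y = v
                · exact Or.inr (by intro w; rw [← hyv]; exact hpriv w)
                · exact absurd ⟨y, hyS, hyu, hyv, hpriv⟩ hno
            have hz := hbadAB z'.1 hzS hzb
            have hz1' := hbadAB z1 hz1S hz1no
            have hkey1 : G.Adj u z'.1 ∨ G.Adj v z'.1 := by
              rcases hz with f | f
              · exact Or.inl ((f z'.1).mpr rfl).1
              · exact Or.inr ((f z'.1).mpr rfl).1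
            have hkey2 : ∀ w : V, w ∉ S → (G.Adj u w ∨ G.Adj v w) → w = z'.1 ∨ w = z1 := by
              intro w hwS hc
              rcases hz with fz | fz <;> rcases hz1' with f1 | f1
              · exact absurd ((fz z1).mp ((f1 z1).mpr rfl)) hzz1.symm
              · rcases hc with hc | hc
                · exact Or.inl ((fz w).mp ⟨hc, hwS⟩)
                · exact Or.inr ((f1 w).mp ⟨hc, hwS⟩)
              · rcases hc with hc | hc
                · exact Or.inr ((f1 w).mp ⟨hc, hwS⟩)
                · exact Or.inl ((fz w).mp ⟨hc, hwS⟩)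
              · exact absurd ((fz z1).mp ((f1 z1).mpr rfl)) hzz1.symm
            refine ⟨xs, Finset.mem_insert_of_mem hxmem, fun w' => ?_⟩
            constructor
            · rintro ⟨hadj, hw'T⟩
              have hwS : w'.1 ∉ S := fun c =>
                hw'T (Finset.mem_insert_of_mem ((hmemiff2 w').mpr c))
              have hwu : w'.1 ≠ u := fun e => hwS (e ▸ hu)
              have hwz1 : w'.1 ≠ z1 := by
                intro e
                rw [show w' = (⟨z1, hz1v⟩ : {x : V // x ≠ v}) from Subtype.ext e] at hw'T
                exact absurd (Finset.mem_insert_self _ _) hw'T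
              have hc : G.Adj u w'.1 ∨ G.Adj v w'.1 := by
                rcases (ce_adj.mp hadj).2 with hc | ⟨-, hc⟩ | ⟨e, -⟩
                · exact Or.inl hc
                · exact Or.inr hc
                · exact absurd e hwu
              rcases hkey2 w'.1 hwS hc with e | e
              · exact Subtype.ext e
              · exact absurd e hwz1
            · intro hwz
              rw [hwz]
              refine ⟨ce_adj.mpr ⟨?_, ?_⟩, hz'T⟩
              · intro e
                exact hzu (congrArg Subtype.val e).symm
              · rcases hkey1 with hc | hc
                · exact Or.inl hc
                · exact Or.inr (Or.inl ⟨rfl, hc⟩)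
        · -- cardinality
          have h5 := Finset.card_insert_le (⟨z1, hz1v⟩ : {x : V // x ≠ v}) (S.image ψ)
          have h6 := himgcard.2
          have h7 : 1 ≤ S.card := Finset.card_pos.mpr ⟨v, hv⟩
          omega
      · -- no bad vertex : T = S.image ψ
        push_neg at hbad
        refine ⟨S.image ψ, ⟨?_, ?_⟩, by have := himgcard.2; omega⟩
        · intro z' hz'T
          exact hdom2 z' (fun c => hz'T ((hmemiff2 z').mpr c))
        · intro z' hz'T
          have hzS : z'.1 ∉ S := fun c => hz'T ((hmemiff2 z').mpr c)
          obtain ⟨y, hyS, hyu, hyv, hpriv⟩ := hbad z'.1 hzS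
          refine ⟨⟨y, hyv⟩, hmem1 _ hyS, fun w' => ?_⟩
          constructor
          · rintro ⟨hadj, hw'T⟩
            have hwS : w'.1 ∉ S := fun c => hw'T ((hmemiff2 w').mpr c)
            have hwu : w'.1 ≠ u := fun e => hwS (e ▸ hu)
            rcases (ce_adj.mp hadj).2 with hc | ⟨e, -⟩ | ⟨e, -⟩
            · exact Subtype.ext ((hpriv w'.1).mp ⟨hc, hwS⟩)
            · exact absurd e hyu
            · exact absurd e hwu
          · intro hwz
            rw [hwz]
            exact ⟨lift_adj2 hyv ((hpriv z'.1).mpr rfl).1, hz'T⟩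
    · -- Case 4 : v ∈ S, u ∉ S : T = S.image ψ
      refine ⟨S.image ψ, ⟨?_, ?_⟩, Finset.card_image_le⟩
      · intro z' hz'T
        have hzS : z'.1 ∉ S := fun c => hz'T (hmem1 _ c)
        have hzu : z'.1 ≠ u := fun e => hz'T (by have he : z' = xs := Subtype.ext e; rw [he]; exact hxmem)
        obtain ⟨y, hyS, hadj⟩ := hdom z'.1 hzS
        by_cases hyv : y = v
        · rw [hyv] at hadj
          refine ⟨xs, hxmem, ce_adj.mpr ⟨?_, Or.inr (Or.inl ⟨rfl, hadj⟩)⟩⟩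
          intro e
          exact hzu (congrArg Subtype.val e).symm
        · exact ⟨⟨y, hyv⟩, hmem1 _ hyS, lift_adj2 hyv hadj⟩
      · intro z' hz'T
        have hzS : z'.1 ∉ S := fun c => hz'T (hmem1 _ c)
        have hzu : z'.1 ≠ u := fun e => hz'T (by have he : z' = xs := Subtype.ext e; rw [he]; exact hxmem)
        obtain ⟨y, hyS, hpriv⟩ := hsup z'.1 hzS
        have hyu : y ≠ u := fun e => hu (e ▸ hyS)
        have hyv : y ≠ v := by
          intro e
          have : u = z'.1 := (hpriv u).mp ⟨by rw [e]; exact h.symm, hu⟩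
          exact hzu this.symm
        refine ⟨⟨y, hyv⟩, hmem1 _ hyS, fun w' => ?_⟩
        constructor
        · rintro ⟨hadj, hw'T⟩
          have hwS : w'.1 ∉ S := fun c => hw'T (hmem1 _ c)
          have hwu : w'.1 ≠ u := fun e => hw'T (by have he : w' = xs := Subtype.ext e; rw [he]; exact hxmem)
          rcases (ce_adj.mp hadj).2 with hc | ⟨e, -⟩ | ⟨e, -⟩
          · exact Subtype.ext ((hpriv w'.1).mp ⟨hc, hwS⟩)
          · exact absurd e hyu
          · exact absurd e hwu
        · intro hwz
          rw [hwz]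
          exact ⟨lift_adj2 hyv ((hpriv z'.1).mpr rfl).1, hz'T⟩
  · -- v ∉ S : T = S.image ψ
    have hmemiff : ∀ z' : {x : V // x ≠ v}, z' ∈ S.image ψ ↔ z'.1 ∈ S := by
      intro z'
      constructor
      · intro hz'
        rcases hmem3 z' hz' with hc | ⟨-, hvS⟩
        · exact hc
        · exact absurd hvS hv
      · exact hmem1 z'
    refine ⟨S.image ψ, ⟨?_, ?_⟩, Finset.card_image_le⟩
    · intro z' hz'T
      have hzS : z'.1 ∉ S := fun c => hz'T ((hmemiff z').mpr c)
      obtain ⟨y, hyS, hadj⟩ := hdom z'.1 hzS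
      have hyv : y ≠ v := fun e => hv (e ▸ hyS)
      exact ⟨⟨y, hyv⟩, hmem1 _ hyS, lift_adj2 hyv hadj⟩
    · intro z' hz'T
      have hzS : z'.1 ∉ S := fun c => hz'T ((hmemiff z').mpr c)
      obtain ⟨y, hyS, hpriv⟩ := hsup z'.1 hzS
      have hyv : y ≠ v := fun e => hv (e ▸ hyS)
      have hyu : y ≠ u := by
        intro e
        have : v = z'.1 := (hpriv v).mp ⟨by rw [e]; exact h, hv⟩
        exact z'.2 this.symm
      refine ⟨⟨y, hyv⟩, hmem1 _ hyS, fun w' => ?_⟩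
      constructor
      · rintro ⟨hadj, hw'T⟩
        have hwS : w'.1 ∉ S := fun c => hw'T ((hmemiff w').mpr c)
        rcases (ce_adj.mp hadj).2 with hc | ⟨e, -⟩ | ⟨-, hadjv⟩
        · exact Subtype.ext ((hpriv w'.1).mp ⟨hc, hwS⟩)
        · exact absurd e hyu
        · have : v = z'.1 := (hpriv v).mp ⟨hadjv.symm, hv⟩
          exact absurd this.symm z'.2
      · intro hwz
        rw [hwz]
        exact ⟨lift_adj2 hyv ((hpriv z'.1).mpr rfl).1, hz'T⟩

lemma sd_univ {V : Type*} [Fintype V] (G : SimpleGraph V) :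
    IsSuperDominatingSet G Finset.univ :=
  ⟨fun a ha => absurd (Finset.mem_univ a) ha, fun a ha => absurd (Finset.mem_univ a) ha⟩

lemma sdn_exists {V : Type*} [Fintype V] (G : SimpleGraph V) :
    ∃ S : Finset V, IsSuperDominatingSet G S ∧ S.card = superDominationNumber G := by
  have hne : {n | ∃ S : Finset V, IsSuperDominatingSet G S ∧ S.card = n}.Nonempty :=
    ⟨_, Finset.univ, sd_univ G, rfl⟩
  exact Nat.sInf_mem hne

lemma sdn_le {V : Type*} (G : SimpleGraph V) {S : Finset V}
    (hS : IsSuperDominatingSet G S) : superDominationNumber G ≤ S.card :=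
  Nat.sInf_le ⟨S, hS, rfl⟩

/-- For any graph `G` and edge `e = uv`, `γ_sp(G) - 1 ≤ γ_sp(G/e) ≤ γ_sp(G)`. -/
theorem stmt11 {V : Type*} [Fintype V] (G : SimpleGraph V) (u v : V) (h : G.Adj u v) :
    superDominationNumber G - 1 ≤ superDominationNumber (contractEdge G u v) ∧
    superDominationNumber (contractEdge G u v) ≤ superDominationNumber G := by
  classical
  constructor
  · obtain ⟨T, hT, hTc⟩ := sdn_exists (contractEdge G u v)
    obtain ⟨S, hSsd, hSc⟩ := lower_aux h T hT
    have h1 := sdn_le G hSsd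
    omega
  · obtain ⟨S, hSsd, hSc⟩ := sdn_exists G
    obtain ⟨T, hTsd, hTc⟩ := upper_aux h S hSsd
    have h1 := sdn_le (contractEdge G u v) hTsd
    omega
end
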